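/- Let k ≥ 1 and p ≥ 0 be fixed integers. Then there exists a constant N_{p,k} > 0 such that for every integer n ≥ max(p, k) and every f : [0,∞) → ℝ with ‖f‖_p = sup_{x ≥ 0} w_p(x)|f(x)| finite, one has sup_{x > 0} w_p(x)|M_{n,k}(f; x)| ≤ N_{p,k}·‖f‖_p. In particular, M_{n,k} maps the weighted space C_p into itself. -/

import Mathlib

open MeasureTheory Set

/-- The Gamma-type operator `M_{n,k}(f;x)`. -/
noncomputable def Mnk (n k : ℕ) (f : ℝ → ℝ) (x : ℝ) : ℝ :=
  (((2 * n - k + 1).factorial : ℝ) * x ^ (n + 1) /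
      ((n.factorial : ℝ) * ((n - k).factorial : ℝ))) *
    ∫ t in Ioi (0 : ℝ), t ^ (n - k) / (x + t) ^ (2 * n - k + 2) * f t

/-- The polynomial weight: `w_0 = 1`, `w_p(x) = 1/(1+x^p)` for `p ≥ 1`. -/
noncomputable def wp (p : ℕ) (x : ℝ) : ℝ := if p = 0 then 1 else 1 / (1 + x ^ p)

/-- The weighted sup-norm `‖f‖_p = sup_{x ≥ 0} w_p(x)|f(x)|`. -/
noncomputable def pNorm (p : ℕ) (f : ℝ → ℝ) : ℝ :=
  ⨆ x : {x : ℝ // 0 ≤ x}, wp p x.val * |f x.val|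

/-- Second symmetric difference `Δ_h² f`. -/
def Delta2 (h : ℝ) (f : ℝ → ℝ) (x : ℝ) : ℝ := f (x + 2 * h) - 2 * f (x + h) + f x

/-- Second weighted modulus of smoothness `ω_p²(f;δ)`. -/
noncomputable def omega2 (p : ℕ) (f : ℝ → ℝ) (δ : ℝ) : ℝ :=
  ⨆ h : {h : ℝ // 0 < h ∧ h ≤ δ}, pNorm p (Delta2 h.val f)

/-- First weighted modulus `ω_p¹(f;δ)`. -/
noncomputable def omega1 (p : ℕ) (f : ℝ → ℝ) (δ : ℝ) : ℝ :=
  sSup {y : ℝ | ∃ t x : ℝ, 0 ≤ t ∧ 0 ≤ x ∧ |t - x| ≤ δ ∧ y = wp p x * |f t - f x|}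

/-- Membership in the weighted space `C_p`: `w_p·f` is bounded and uniformly
continuous on `[0,∞)`. -/
def CpMem (p : ℕ) (f : ℝ → ℝ) : Prop :=
  (∃ B : ℝ, ∀ x ≥ (0 : ℝ), |wp p x * f x| ≤ B) ∧
    UniformContinuousOn (fun x => wp p x * f x) (Ici 0)

/-- Steklov mean `f_h`. -/
noncomputable def steklov (f : ℝ → ℝ) (h : ℝ) (x : ℝ) : ℝ :=
  4 / h ^ 2 *
    ∫ s in (0 : ℝ)..(h / 2), ∫ t in (0 : ℝ)..(h / 2),
      (2 * f (x + s + t) - f (x + 2 * (s + t)))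

/-! Since `w_p(t) (1 + t^p) ≥ 1`, we have `|f t| ≤ ‖f‖_p (1 + t^p)`, and `M_{n,k}` is a positive
operator, so `|M_{n,k}(f;x)| ≤ ‖f‖_p M_{n,k}(1 + t^p; x)`. The moments are Beta integrals,
`M_{n,k}(t^q; x) = (n-k+q)! (n-q)! / ((n-k)! n!) · x^q`, and comparing the two ratios of
factorials factor by factor bounds the coefficient by `(q+1)^q`, uniformly in `n`. Hence
`w_p(x) |M_{n,k}(f;x)| ≤ (p+1)^p ‖f‖_p w_p(x) (1 + x^p) ≤ 2 (p+1)^p ‖f‖_p`. -/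

open Filter Topology
open scoped Nat

lemma hasDerivAt_neg_inv_mul_add_pow (b : ℕ) {x t : ℝ} (h : x + t ≠ 0) :
    HasDerivAt (fun s : ℝ => -(((b : ℝ) + 1) * (x + s) ^ (b + 1))⁻¹) ((x + t) ^ (b + 2))⁻¹ t := by
  have hpow : HasDerivAt (fun s : ℝ => ((b : ℝ) + 1) * (x + s) ^ (b + 1))
      (((b : ℝ) + 1) * (((b + 1 : ℕ) : ℝ) * (x + t) ^ b)) t := by
    simpa using (((hasDerivAt_id t).const_add x).fun_pow (b + 1)).const_mul ((b : ℝ) + 1)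
  refine (hpow.fun_inv (by positivity)).neg.congr_deriv ?_
  field_simp
  push_cast
  ring

lemma tendsto_neg_inv_mul_add_pow_atTop (b : ℕ) (x : ℝ) :
    Tendsto (fun s : ℝ => -(((b : ℝ) + 1) * (x + s) ^ (b + 1))⁻¹) atTop (𝓝 0) := by
  have hpow : Tendsto (fun s : ℝ => ((b : ℝ) + 1) * (x + s) ^ (b + 1)) atTop atTop :=
    ((tendsto_pow_atTop (Nat.succ_ne_zero b)).comp
      (tendsto_atTop_add_const_left _ x tendsto_id)).const_mul_atTop (by positivity)
  simpa using hpow.inv_tendsto_atTop.neg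

lemma integrableOn_Ioi_inv_add_pow {x : ℝ} (hx : 0 < x) (b : ℕ) :
    IntegrableOn (fun t : ℝ => ((x + t) ^ (b + 2))⁻¹) (Ioi 0) :=
  integrableOn_Ioi_deriv_of_nonneg'
    (fun t ht => hasDerivAt_neg_inv_mul_add_pow b (by linarith [mem_Ici.1 ht]))
    (fun t ht => inv_nonneg.2 (pow_nonneg (by linarith [mem_Ioi.1 ht]) _))
    (tendsto_neg_inv_mul_add_pow_atTop b x)

lemma integral_Ioi_inv_add_pow {x : ℝ} (hx : 0 < x) (b : ℕ) :
    ∫ t in Ioi (0 : ℝ), ((x + t) ^ (b + 2))⁻¹ = (((b : ℝ) + 1) * x ^ (b + 1))⁻¹ := by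
  rw [integral_Ioi_of_hasDerivAt_of_nonneg'
    (fun t ht => hasDerivAt_neg_inv_mul_add_pow b (by linarith [mem_Ici.1 ht]))
    (fun t ht => inv_nonneg.2 (pow_nonneg (by linarith [mem_Ioi.1 ht]) _))
    (tendsto_neg_inv_mul_add_pow_atTop b x)]
  simp

lemma integrableOn_Ioi_pow_div_add_pow {x : ℝ} (hx : 0 < x) {a c : ℕ} (hac : a + 2 ≤ c) :
    IntegrableOn (fun t : ℝ => t ^ a / (x + t) ^ c) (Ioi 0) := by
  obtain ⟨d, rfl⟩ : ∃ d, c = d + 2 + a := ⟨c - a - 2, by omega⟩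
  refine (integrableOn_Ioi_inv_add_pow hx d).mono'
    (by fun_prop : Measurable _).aestronglyMeasurable
    (ae_restrict_of_forall_mem measurableSet_Ioi fun t (ht : 0 < t) => ?_)
  have hxt : 0 < x + t := by linarith
  rw [Real.norm_of_nonneg (by positivity), div_le_iff₀ (by positivity), pow_add _ (d + 2) a,
    inv_mul_cancel_left₀ (by positivity)]
  exact pow_le_pow_left₀ ht.le (by linarith) a

lemma pow_succ_div_add_pow {x t : ℝ} (h : x + t ≠ 0) (a b : ℕ) :
    t ^ (a + 1) / (x + t) ^ (a + 1 + b + 2) =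
      t ^ a / (x + t) ^ (a + b + 2) - x * (t ^ a / (x + t) ^ (a + (b + 1) + 2)) := by
  rw [show a + 1 + b + 2 = a + (b + 1) + 2 by ring, show a + (b + 1) + 2 = (a + b + 2) + 1 by ring,
    pow_succ]
  field_simp
  ring

lemma integral_Ioi_pow_div_add_pow {x : ℝ} (hx : 0 < x) (a b : ℕ) :
    ∫ t in Ioi (0 : ℝ), t ^ a / (x + t) ^ (a + b + 2) =
      (a ! * b ! : ℝ) / ((a + b + 1)! * x ^ (b + 1)) := by
  induction a generalizing b with
  | zero =>
    simp only [pow_zero, one_div, zero_add, integral_Ioi_inv_add_pow hx, Nat.factorial_succ,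
      Nat.factorial_zero]
    push_cast
    field_simp
  | succ a ih =>
    have hint (c : ℕ) : IntegrableOn (fun t : ℝ => t ^ a / (x + t) ^ (a + c + 2)) (Ioi 0) :=
      integrableOn_Ioi_pow_div_add_pow hx (by omega)
    rw [setIntegral_congr_fun measurableSet_Ioi
        fun t (ht : 0 < t) => pow_succ_div_add_pow (by linarith) a b,
      integral_sub (hint b) ((hint (b + 1)).const_mul x), integral_const_mul, ih, ih,
      show a + 1 + b + 1 = (a + b + 1) + 1 by ring, show a + (b + 1) + 1 = (a + b + 1) + 1 by ring]
    simp only [Nat.factorial_succ]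
    push_cast
    field_simp
    ring

lemma ascFactorial_le_pow_mul_ascFactorial {m r q : ℕ} (h : m ≤ r + q) :
    (m + 1).ascFactorial q ≤ (q + 1) ^ q * (r + 1).ascFactorial q := by
  have hpow : (q + 1) ^ q = ∏ _i ∈ Finset.range q, (q + 1) := by simp
  rw [Nat.ascFactorial_eq_prod_range, Nat.ascFactorial_eq_prod_range, hpow,
    ← Finset.prod_mul_distrib]
  exact Finset.prod_le_prod' fun i _ => by nlinarith

lemma factorial_add_mul_factorial_sub_le {m n q : ℕ} (hmn : m ≤ n) (hqn : q ≤ n) :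
    (m + q)! * (n - q)! ≤ (q + 1) ^ q * (m ! * n !) := by
  rw [← Nat.factorial_mul_ascFactorial, ← Nat.sub_add_cancel hqn, ← Nat.factorial_mul_ascFactorial,
    Nat.add_sub_cancel]
  calc m ! * (m + 1).ascFactorial q * (n - q)!
      ≤ m ! * ((q + 1) ^ q * (n - q + 1).ascFactorial q) * (n - q)! := by
        gcongr
        exact ascFactorial_le_pow_mul_ascFactorial (by omega)
    _ = (q + 1) ^ q * (m ! * ((n - q)! * (n - q + 1).ascFactorial q)) := by ring

lemma Mnk_kernel_mul_pow {n k q : ℕ} (hkn : k ≤ n) (hqn : q ≤ n) (x t : ℝ) :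
    t ^ (n - k) / (x + t) ^ (2 * n - k + 2) * t ^ q =
      t ^ (n - k + q) / (x + t) ^ (n - k + q + (n - q) + 2) := by
  rw [show n - k + q + (n - q) + 2 = 2 * n - k + 2 by omega, pow_add]
  ring

lemma integrableOn_Mnk_integrand_pow {n k q : ℕ} {x : ℝ} (hx : 0 < x) (hkn : k ≤ n)
    (hqn : q ≤ n) :
    IntegrableOn (fun t : ℝ => t ^ (n - k) / (x + t) ^ (2 * n - k + 2) * t ^ q) (Ioi 0) := by
  simpa only [Mnk_kernel_mul_pow hkn hqn] using integrableOn_Ioi_pow_div_add_pow hx (by omega)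

theorem Mnk_pow {n k q : ℕ} {x : ℝ} (hx : 0 < x) (hkn : k ≤ n) (hqn : q ≤ n) :
    Mnk n k (fun t => t ^ q) x = ((n - k + q)! * (n - q)! / ((n - k)! * n !) : ℝ) * x ^ q := by
  simp only [Mnk, Mnk_kernel_mul_pow hkn hqn, integral_Ioi_pow_div_add_pow hx,
    show n - k + q + (n - q) + 1 = 2 * n - k + 1 by omega]
  rw [show n + 1 = (n - q + 1) + q by omega, pow_add]
  field_simp

theorem Mnk_const_mul (n k : ℕ) (c : ℝ) (g : ℝ → ℝ) (x : ℝ) :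
    Mnk n k (fun t => c * g t) x = c * Mnk n k g x := by
  simp only [Mnk, mul_left_comm _ c, integral_const_mul]

theorem abs_Mnk_le {n k : ℕ} {f g : ℝ → ℝ} {x : ℝ} (hx : 0 ≤ x)
    (hg : IntegrableOn (fun t => t ^ (n - k) / (x + t) ^ (2 * n - k + 2) * g t) (Ioi 0))
    (hfg : ∀ t > 0, |f t| ≤ g t) :
    |Mnk n k f x| ≤ Mnk n k g x := by
  rw [Mnk, Mnk, abs_mul, abs_of_nonneg (by positivity)]
  gcongr
  rw [← Real.norm_eq_abs]
  refine norm_integral_le_of_norm_le hg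
    (ae_restrict_of_forall_mem measurableSet_Ioi fun t (ht : 0 < t) => ?_)
  rw [Real.norm_eq_abs, abs_mul, abs_of_nonneg (by positivity)]
  gcongr
  exact hfg t ht

theorem Mnk_one_add_pow_le {n k p : ℕ} {x : ℝ} (hx : 0 < x) (hkn : k ≤ n) (hpn : p ≤ n) :
    Mnk n k (fun t => 1 + t ^ p) x ≤ (p + 1) ^ p * (1 + x ^ p) := by
  have hadd : Mnk n k (fun t => 1 + t ^ p) x =
      Mnk n k (fun t => t ^ 0) x + Mnk n k (fun t => t ^ p) x := by
    rw [Mnk, Mnk, Mnk, ← mul_add, ← integral_add (integrableOn_Mnk_integrand_pow hx hkn n.zero_le)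
      (integrableOn_Mnk_integrand_pow hx hkn hpn)]
    simp only [pow_zero, mul_add]
  have hmoment : ((n - k + p)! * (n - p)! / ((n - k)! * n !) : ℝ) ≤ (p + 1) ^ p := by
    rw [div_le_iff₀ (by positivity)]
    exact_mod_cast factorial_add_mul_factorial_sub_le (n.sub_le k) hpn
  rw [hadd, Mnk_pow hx hkn n.zero_le, Mnk_pow hx hkn hpn]
  simp only [add_zero, Nat.sub_zero, pow_zero, mul_one]
  rw [div_self (by positivity), mul_add, mul_one]
  gcongr
  exact one_le_pow₀ (le_add_of_nonneg_left p.cast_nonneg)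

lemma wp_nonneg (p : ℕ) {x : ℝ} (hx : 0 ≤ x) : 0 ≤ wp p x := by
  unfold wp
  split_ifs <;> positivity

lemma one_le_wp_mul_one_add_pow (p : ℕ) {x : ℝ} (hx : 0 ≤ x) : 1 ≤ wp p x * (1 + x ^ p) := by
  unfold wp
  split_ifs with hp
  · simp [hp]
  · rw [one_div, inv_mul_cancel₀ (by positivity)]

lemma wp_mul_one_add_pow_le_two (p : ℕ) {x : ℝ} (hx : 0 ≤ x) : wp p x * (1 + x ^ p) ≤ 2 := by
  unfold wp
  split_ifs with hp
  · norm_num [hp]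
  · rw [one_div, inv_mul_cancel₀ (by positivity)]
    norm_num

lemma pNorm_nonneg (p : ℕ) (f : ℝ → ℝ) : 0 ≤ pNorm p f :=
  Real.iSup_nonneg fun x => mul_nonneg (wp_nonneg p x.2) (abs_nonneg _)

lemma abs_le_pNorm_mul_one_add_pow {p : ℕ} {f : ℝ → ℝ}
    (hf : ∃ B : ℝ, ∀ x ≥ (0 : ℝ), wp p x * |f x| ≤ B) {t : ℝ} (ht : 0 ≤ t) :
    |f t| ≤ pNorm p f * (1 + t ^ p) := by
  obtain ⟨B, hB⟩ := hf
  have hle : wp p t * |f t| ≤ pNorm p f :=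
    le_ciSup (f := fun x : {x : ℝ // 0 ≤ x} => wp p x.val * |f x.val|)
      ⟨B, by rintro _ ⟨y, rfl⟩; exact hB y y.2⟩ ⟨t, ht⟩
  calc |f t| ≤ |f t| * (wp p t * (1 + t ^ p)) :=
        le_mul_of_one_le_right (abs_nonneg _) (one_le_wp_mul_one_add_pow p ht)
    _ = wp p t * |f t| * (1 + t ^ p) := by ring
    _ ≤ pNorm p f * (1 + t ^ p) := by gcongr

theorem abs_Mnk_le_pNorm_mul {n k p : ℕ} {f : ℝ → ℝ} {x : ℝ} (hx : 0 < x) (hkn : k ≤ n)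
    (hpn : p ≤ n) (hf : ∃ B : ℝ, ∀ x ≥ (0 : ℝ), wp p x * |f x| ≤ B) :
    |Mnk n k f x| ≤ pNorm p f * Mnk n k (fun t => 1 + t ^ p) x := by
  rw [← Mnk_const_mul]
  have hint := ((integrableOn_Mnk_integrand_pow hx hkn n.zero_le).add
    (integrableOn_Mnk_integrand_pow hx hkn hpn)).const_mul (pNorm p f)
  refine abs_Mnk_le hx.le (IntegrableOn.congr_fun hint (fun t _ => ?_) measurableSet_Ioi)
    fun t ht => abs_le_pNorm_mul_one_add_pow hf ht.le
  simp only [Pi.add_apply, pow_zero]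
  ring

theorem Mnk_bounded_on_Cp_general (k p : ℕ) :
    ∃ N > (0 : ℝ), ∀ n : ℕ, max p k ≤ n → ∀ f : ℝ → ℝ, Measurable f →
      (∃ B : ℝ, ∀ x ≥ (0 : ℝ), wp p x * |f x| ≤ B) →
      ∀ x : ℝ, 0 < x → wp p x * |Mnk n k f x| ≤ N * pNorm p f := by
  refine ⟨2 * (p + 1) ^ p, by positivity, fun n hn f _ hf x hx => ?_⟩
  have hkn : k ≤ n := le_of_max_le_right hn
  have hpn : p ≤ n := le_of_max_le_left hn
  have hP := pNorm_nonneg p f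
  calc wp p x * |Mnk n k f x|
      ≤ wp p x * (pNorm p f * ((p + 1) ^ p * (1 + x ^ p))) := by
        gcongr
        · exact wp_nonneg p hx.le
        · exact (abs_Mnk_le_pNorm_mul hx hkn hpn hf).trans
            (mul_le_mul_of_nonneg_left (Mnk_one_add_pow_le hx hkn hpn) hP)
    _ = (p + 1) ^ p * pNorm p f * (wp p x * (1 + x ^ p)) := by ring
    _ ≤ (p + 1) ^ p * pNorm p f * 2 := by
        gcongr
        exact wp_mul_one_add_pow_le_two p hx.le
    _ = 2 * (p + 1) ^ p * pNorm p f := by ring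

/-- `M_{n,k}` is a bounded operator on the weighted space:
`w_p(x)|M_{n,k}(f;x)| ≤ N_{p,k}·‖f‖_p`. -/
theorem Mnk_bounded_on_Cp (k p : ℕ) (hk : 1 ≤ k) :
    ∃ N > (0 : ℝ), ∀ n : ℕ, max p k ≤ n → ∀ f : ℝ → ℝ, Measurable f →
      (∃ B : ℝ, ∀ x ≥ (0 : ℝ), wp p x * |f x| ≤ B) →
      ∀ x : ℝ, 0 < x → wp p x * |Mnk n k f x| ≤ N * pNorm p f :=
  Mnk_bounded_on_Cp_general k p
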